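/- For the W(2,2) Lie conformal algebra 𝒲 and the rank-one module M_{Δ,α} with α ≠ 0 (where L_λ v = (∂+α+Δλ)v and M_λ v = 0 on M_{Δ,α} = ℂ[∂]v), the reduced cohomology H^q(𝒲, M_{Δ,α}) vanishes for all q ≥ 0. -/

import Mathlib

open MvPolynomial

set_option synthInstance.maxHeartbeats 400000

/-! ### The basic complex of the W(2,2) Lie conformal algebra `𝒲` with
coefficients in the rank-one module `M_{Δ,α} = ℂ[∂]v`, where
`L_λ v = (∂+α+Δλ)v` and `M_λ v = 0`.

`𝒲` is the free `ℂ[∂]`-module on `{L, M}` (`0 = L`, `1 = M`) with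
`[L_λ L] = (∂+2λ)L`, `[L_λ M] = (∂+2λ)M`, `[M_λ M] = 0`.  A `q`-cochain takes
values in `M_{Δ,α}[λ₁,…,λ_q] = ℂ[∂,λ₁,…,λ_q]v`; we encode it as a function of
a basis tuple `X : Fin q → Fin 2`, the variables `λ : Fin q → ℂ` and the value
`x` of `∂`. -/

abbrev VCochain (q : ℕ) : Type := (Fin q → Fin 2) → (Fin q → ℂ) → ℂ → ℂ

def IsPolyVCochain {q : ℕ} (γ : VCochain q) : Prop :=
  ∀ X, ∃ P : MvPolynomial (Fin (q + 1)) ℂ, ∀ l x, γ X l x = eval (Fin.snoc l x) P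

def IsSkewVCochain {q : ℕ} (γ : VCochain q) : Prop :=
  ∀ σ : Equiv.Perm (Fin q), ∀ X l x,
    γ (X ∘ σ) (l ∘ σ) x = (Equiv.Perm.sign σ : ℤ) * γ X l x

def IsVCochain {q : ℕ} (γ : VCochain q) : Prop := IsPolyVCochain γ ∧ IsSkewVCochain γ

/-- scalar coefficient of `[x_λ y]` for basis elements: `0` iff `x = y = M`. -/
def bcoef (x y : Fin 2) : ℂ := if x = 1 ∧ y = 1 then 0 else 1

/-- the basis element appearing in `[x_λ y]`. -/
def bres (x y : Fin 2) : Fin 2 := max x y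

def removeOne {α : Type*} {n : ℕ} (i : Fin n) (X : Fin n → α) (d : α) : ℕ → α :=
  fun k => ((List.ofFn X).eraseIdx i.val).getD k d

def removeTwo {α : Type*} {n : ℕ} (i j : Fin n) (X : Fin n → α) (d : α) : ℕ → α :=
  fun k => (((List.ofFn X).eraseIdx j.val).eraseIdx i.val).getD k d

/-- the differential with coefficients in `M_{Δ,α}`:
`(dγ) = ∑ᵢ (−1)^{i+1} aᵢ_{λᵢ} γ(…âᵢ…) + ∑_{i<j} (−1)^{i+j} γ([aᵢ_{λᵢ} aⱼ],…)`.
On basis arguments, `L_{λᵢ}` acts on a value `p(∂)v` as `p(∂+λᵢ)(∂+α+Δλᵢ)v`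
and `M_{λᵢ}` acts as zero; the bracket term contributes `(λᵢ−λⱼ)·bcoef` on the
basis element `bres` in the first slot. -/
noncomputable def dV (Δ α : ℂ) {q : ℕ} (γ : VCochain q) : VCochain (q + 1) :=
  fun X l x =>
    (∑ i : Fin (q + 1),
      (-1 : ℂ) ^ i.val * (if X i = 0 then x + α + Δ * l i else 0) *
        γ (fun k => removeOne i X 0 k.val) (fun k => removeOne i l 0 k.val)
          (x + l i))
    + ∑ p ∈ Finset.univ.filter (fun p : Fin (q+1) × Fin (q+1) => p.1 < p.2),
        (-1 : ℂ) ^ (p.1.val + p.2.val) * bcoef (X p.1) (X p.2) * (l p.1 - l p.2) *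
          γ (fun k => if k.val = 0 then bres (X p.1) (X p.2)
                else removeTwo p.1 p.2 X 0 (k.val - 1))
            (fun k => if k.val = 0 then l p.1 + l p.2
                else removeTwo p.1 p.2 l 0 (k.val - 1)) x

/-- `dV` as a linear map. -/
noncomputable def dVLin (Δ α : ℂ) (q : ℕ) : VCochain q →ₗ[ℂ] VCochain (q + 1) where
  toFun := dV Δ α
  map_add' γ₁ γ₂ := by
    funext X l x
    simp only [dV, Pi.add_apply, mul_add, Finset.sum_add_distrib]
    ring
  map_smul' c γ := by
    funext X l x
    simp only [dV, Pi.smul_apply, smul_eq_mul, RingHom.id_apply, Finset.mul_sum,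
      mul_add]
    congr 1 <;> exact Finset.sum_congr rfl fun p _ => by ring

/-- the `ℂ`-subspace of genuine cochains. -/
noncomputable def vcochainSub (q : ℕ) : Submodule ℂ (VCochain q) where
  carrier := {γ | IsVCochain γ}
  add_mem' := by
    rintro a b ⟨hap, has⟩ ⟨hbp, hbs⟩
    refine ⟨fun X => ?_, fun σ X l x => ?_⟩
    · obtain ⟨P, hP⟩ := hap X; obtain ⟨Q, hQ⟩ := hbp X
      exact ⟨P + Q, fun l x => by simp [hP, hQ]⟩
    · have := has σ X l x; have := hbs σ X l x
      simp only [Pi.add_apply, *]; ring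
  zero_mem' := ⟨fun X => ⟨0, by simp⟩, fun σ X l x => by simp⟩
  smul_mem' := by
    rintro c γ ⟨hp, hs⟩
    refine ⟨fun X => ?_, fun σ X l x => ?_⟩
    · obtain ⟨P, hP⟩ := hp X
      exact ⟨c • P, fun l x => by simp [hP]⟩
    · have := hs σ X l x
      simp only [Pi.smul_apply, smul_eq_mul, *]; ring

/-- the action of `∂` on the basic complex with coefficients in `M_{Δ,α}`:
`(∂γ)_{λ₁,…,λ_q} = (∂_V + ∑ᵢ λᵢ)γ`. -/
noncomputable def paV (q : ℕ) : VCochain q →ₗ[ℂ] VCochain q where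
  toFun γ := fun X l x => (x + ∑ i, l i) * γ X l x
  map_add' γ₁ γ₂ := by funext X l x; simp [mul_add]
  map_smul' c γ := by funext X l x; simp; ring

/-- reduced `q`-cocycles. -/
noncomputable def redZV (Δ α : ℂ) (q : ℕ) : Submodule ℂ (VCochain q) :=
  vcochainSub q ⊓
    Submodule.comap (dVLin Δ α q) (Submodule.map (paV (q+1)) (vcochainSub (q+1)))

/-- reduced `q`-coboundaries. -/
noncomputable def redBV (Δ α : ℂ) : (q : ℕ) → Submodule ℂ (VCochain q)
  | 0 => Submodule.map (paV 0) (vcochainSub 0)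
  | (q + 1) => Submodule.map (dVLin Δ α q) (vcochainSub q)
      ⊔ Submodule.map (paV (q+1)) (vcochainSub (q+1))

/-- the `q`-th reduced cohomology `H^q(𝒲, M_{Δ,α})`. -/
noncomputable abbrev reducedHV (Δ α : ℂ) (q : ℕ) :=
  redZV Δ α q ⧸ Submodule.comap (redZV Δ α q).subtype (redBV Δ α q)

lemma getD_ofFn {A : Type*} {n : ℕ} (X : Fin n → A) (e : A) (k : Fin n) :
    (List.ofFn X).getD k.val e = X k := by
  have h : k.val < (List.ofFn X).length := by simp [k.isLt]
  rw [List.getD_eq_getElem?_getD, List.getElem?_eq_getElem h, List.getElem_ofFn]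
  simp

lemma ofFn_eraseIdx {A : Type*} {n : ℕ} (i : Fin (n+1)) (X : Fin (n+1) → A) :
    (List.ofFn X).eraseIdx i.val = List.ofFn (X ∘ i.succAbove) := by
  apply List.ext_getElem
  · simp [List.length_eraseIdx_of_lt, i.isLt]
  · intro k h1 h2
    rw [List.getElem_eraseIdx]
    split
    · next h =>
      simp only [List.getElem_ofFn, Function.comp_apply]
      congr 1
      apply Fin.ext
      simp only [Fin.succAbove, Fin.lt_def]
      split <;> simp_all
    · next h =>
      simp only [List.getElem_ofFn, Function.comp_apply]
      congr 1
      apply Fin.ext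
      simp only [Fin.succAbove, Fin.lt_def]
      split <;> simp_all <;> omega

lemma removeOne_apply {A : Type*} {n : ℕ} (i : Fin (n+1)) (X : Fin (n+1) → A) (d : A)
    (k : Fin n) : removeOne i X d k.val = X (i.succAbove k) := by
  unfold removeOne
  rw [ofFn_eraseIdx]
  exact getD_ofFn _ _ _

lemma ofFn_snoc' {A : Type*} {n : ℕ} (X : Fin n → A) (d : A) :
    List.ofFn (Fin.snoc X d : Fin (n+1) → A) = List.ofFn X ++ [d] := by
  rw [List.ofFn_succ']
  simp

-- F1
lemma eraseIdx_ofFn_snoc_castSucc {A : Type*} {n : ℕ} (i : Fin (n+1)) (X : Fin (n+1) → A)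
    (d : A) :
    (List.ofFn (Fin.snoc X d : Fin (n+2) → A)).eraseIdx i.castSucc.val
      = ((List.ofFn X).eraseIdx i.val) ++ [d] := by
  rw [ofFn_snoc', List.eraseIdx_append_of_lt_length (by simp [i.isLt])]
  rfl

-- F2
lemma eraseIdx_ofFn_snoc_last {A : Type*} {n : ℕ} (X : Fin (n+1) → A) (d : A) :
    (List.ofFn (Fin.snoc X d : Fin (n+2) → A)).eraseIdx (Fin.last (n+1)).val
      = List.ofFn X := by
  rw [ofFn_snoc', List.eraseIdx_append_of_length_le (by simp)]
  simp

-- S1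
lemma removeOne_snoc_castSucc {A : Type*} {n : ℕ} (i : Fin (n+1)) (X : Fin (n+1) → A)
    (d e : A) :
    (fun k : Fin (n+1) => removeOne i.castSucc (Fin.snoc X d) e k.val)
      = Fin.snoc (fun k : Fin n => removeOne i X e k.val) d := by
  funext k
  unfold removeOne
  rw [eraseIdx_ofFn_snoc_castSucc]
  induction k using Fin.lastCases with
  | last =>
    rw [Fin.snoc_last, List.getD_append_right _ _ _ _
      (by simp [List.length_eraseIdx_of_lt, i.isLt])]
    simp [List.length_eraseIdx_of_lt, i.isLt]
  | cast k =>
    rw [Fin.snoc_castSucc]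
    rw [List.getD_append _ _ _ _ (by simp [List.length_eraseIdx_of_lt, i.isLt, k.isLt])]
    rfl

-- S2
lemma removeOne_snoc_last {A : Type*} {n : ℕ} (X : Fin (n+1) → A) (d e : A) :
    (fun k : Fin (n+1) => removeOne (Fin.last (n+1)) (Fin.snoc X d) e k.val) = X := by
  funext k
  unfold removeOne
  rw [eraseIdx_ofFn_snoc_last]
  exact getD_ofFn _ _ _

-- S4
lemma removeTwo_castSucc_last {A : Type*} {n : ℕ} (i : Fin (n+1)) (X : Fin (n+1) → A)
    (d e : A) :
    removeTwo i.castSucc (Fin.last (n+1)) (Fin.snoc X d) e = removeOne i X e := by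
  funext k
  unfold removeTwo removeOne
  rw [eraseIdx_ofFn_snoc_last]
  rfl

-- S3
lemma removeTwo_snoc_castSucc {A : Type*} {n : ℕ} (i j : Fin (n+1)) (h : i < j)
    (X : Fin (n+1) → A) (b d e : A) :
    (fun k : Fin (n+1) => if k.val = 0 then b
        else removeTwo i.castSucc j.castSucc (Fin.snoc X d) e (k.val - 1))
      = Fin.snoc (fun k : Fin n => if k.val = 0 then b else removeTwo i j X e (k.val - 1)) d := by
  have hn : 0 < n := lt_of_le_of_lt (Nat.zero_le _) (lt_of_lt_of_le h (Nat.lt_succ_iff.mp j.isLt))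
  have hij : i.val < n := lt_of_lt_of_le h (Nat.lt_succ_iff.mp j.isLt)
  have hlen1 : ((List.ofFn X).eraseIdx j.val).length = n := by
    rw [List.length_eraseIdx_of_lt (by simpa using j.isLt)]; simp
  have hLlen : (((List.ofFn X).eraseIdx j.val).eraseIdx i.val).length = n - 1 := by
    rw [List.length_eraseIdx_of_lt (by rw [hlen1]; exact hij), hlen1]
  have key : (((List.ofFn (Fin.snoc X d : Fin (n+2) → A)).eraseIdx j.castSucc.val).eraseIdx
      i.castSucc.val) = (((List.ofFn X).eraseIdx j.val).eraseIdx i.val) ++ [d] := by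
    rw [eraseIdx_ofFn_snoc_castSucc, List.eraseIdx_append_of_lt_length]
    · rfl
    · rw [List.length_eraseIdx_of_lt (by simp [j.isLt])]
      simp
      omega
  funext k
  unfold removeTwo
  rw [key]
  induction k using Fin.lastCases with
  | last =>
    rw [Fin.snoc_last]
    simp only [Fin.val_last]
    rw [if_neg (by omega), List.getD_append_right _ _ _ _ (by omega), hLlen]
    simp [show n - (n - 1) - 1 = 0 by omega]  -- getD [d] 0 e = d
  | cast k =>
    rw [Fin.snoc_castSucc]
    simp only [Fin.coe_castSucc]
    by_cases h0 : k.val = 0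
    · simp [h0]
    · rw [if_neg h0, if_neg h0, List.getD_append _ _ _ _ (by omega)]

-- S5
lemma cons_removeOne_eq_comp_cycleRange {A : Type*} {n : ℕ} (i : Fin (n+1))
    (X : Fin (n+1) → A) (e : A) :
    (fun k : Fin (n+1) => if k.val = 0 then X i else removeOne i X e (k.val - 1))
      = X ∘ ⇑(i.cycleRange)⁻¹ := by
  funext k
  induction k using Fin.cases with
  | zero => simp [Equiv.Perm.inv_def, Fin.cycleRange_symm_zero]
  | succ j =>
    simp only [Function.comp_apply, Equiv.Perm.inv_def, Fin.cycleRange_symm_succ,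
      Fin.val_succ, Nat.add_sub_cancel]
    rw [if_neg (by omega)]
    exact removeOne_apply i X e j

lemma pair_sum_split {n : ℕ} (f : Fin (n+2) × Fin (n+2) → ℂ) :
    ∑ p ∈ Finset.univ.filter (fun p : Fin (n+2) × Fin (n+2) => p.1 < p.2), f p
      = (∑ p ∈ Finset.univ.filter (fun p : Fin (n+1) × Fin (n+1) => p.1 < p.2),
          f (p.1.castSucc, p.2.castSucc))
        + ∑ i : Fin (n+1), f (i.castSucc, Fin.last (n+1)) := by
  rw [Finset.sum_filter, Finset.sum_filter, Fintype.sum_prod_type]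
  have h1 : ∀ i : Fin (n+2), (∑ j, if i < j then f (i, j) else 0)
      = (∑ j₀ : Fin (n+1), if i < j₀.castSucc then f (i, j₀.castSucc) else 0)
        + (if i < Fin.last (n+1) then f (i, Fin.last (n+1)) else 0) :=
    fun i => Fin.sum_univ_castSucc _
  rw [Finset.sum_congr rfl (fun i _ => h1 i), Finset.sum_add_distrib]
  congr 1
  · rw [Fin.sum_univ_castSucc (f := fun i : Fin (n+2) =>
      ∑ j₀ : Fin (n+1), if i < j₀.castSucc then f (i, j₀.castSucc) else 0)]
    have h0 : (∑ j₀ : Fin (n+1), if Fin.last (n+1) < j₀.castSucc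
        then f (Fin.last (n+1), j₀.castSucc) else 0) = 0 :=
      Finset.sum_eq_zero fun j _ => if_neg (lt_asymm (Fin.castSucc_lt_last j))
    rw [h0, add_zero, Fintype.sum_prod_type]
    apply Finset.sum_congr rfl; intro i _
    apply Finset.sum_congr rfl; intro j _
    simp only [Fin.castSucc_lt_castSucc_iff]
  · rw [Fin.sum_univ_castSucc (f := fun i : Fin (n+2) =>
      if i < Fin.last (n+1) then f (i, Fin.last (n+1)) else 0)]
    simp [Fin.castSucc_lt_last]

/-- the homotopy operator `τ`. -/
def tauV {q : ℕ} (γ : VCochain (q+1)) : VCochain q :=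
  fun X l x => (-1 : ℂ)^q * γ (Fin.snoc X 0) (Fin.snoc l 0) x

lemma homotopy (Δ α : ℂ) {n : ℕ} (γ : VCochain (n+1)) (hskew : IsSkewVCochain γ)
    (X : Fin (n+1) → Fin 2) (l : Fin (n+1) → ℂ) (x : ℂ) :
    dV Δ α (tauV γ) X l x + tauV (dV Δ α γ) X l x
      = (α + x + ∑ i, l i) * γ X l x := by
  have neg_one_pow_cancel : ∀ m k : ℕ, ((-1:ℂ))^(m + k) * (-1)^m = (-1)^k := by
    intro m k
    rw [← pow_add, show m + k + m = 2*m + k by ring, pow_add, pow_mul]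
    norm_num
  have bcoef_zero : ∀ a : Fin 2, bcoef a 0 = 1 := by
    intro a; simp [bcoef]
  have bres_zero : ∀ a : Fin 2, bres a 0 = a := fun a => max_eq_left (Fin.zero_le a)
  have hA1 : (∑ i : Fin (n + 1),
        ((-1:ℂ) ^ (i:ℕ) * if X i = 0 then x + α + Δ * l i else 0) *
          ((-1) ^ n *
            γ (Fin.snoc (fun k : Fin n => removeOne i X (0 : Fin 2) k.val) 0) (Fin.snoc (fun k : Fin n => removeOne i l (0 : ℂ) k.val) 0)
              (x + l i)))
      = (-1:ℂ)^n * ∑ i : Fin (n + 1),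
        ((-1:ℂ) ^ (i:ℕ) * if X i = 0 then x + α + Δ * l i else 0) *
          γ (Fin.snoc (fun k : Fin n => removeOne i X (0 : Fin 2) k.val) 0) (Fin.snoc (fun k : Fin n => removeOne i l (0 : ℂ) k.val) 0)
            (x + l i) := by
    rw [Finset.mul_sum]
    exact Finset.sum_congr rfl fun i _ => by ring
  have hA2 : (∑ p ∈ Finset.filter (fun p : Fin (n+1) × Fin (n+1) => p.1 < p.2) Finset.univ,
        (-1:ℂ) ^ ((p.1:ℕ) + (p.2:ℕ)) * bcoef (X p.1) (X p.2) * (l p.1 - l p.2) *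
          ((-1) ^ n *
            γ (Fin.snoc (fun k : Fin n => if k.val = 0 then bres (X p.1) (X p.2)
                  else removeTwo p.1 p.2 X (0 : Fin 2) (k.val - 1)) 0)
              (Fin.snoc (fun k : Fin n => if k.val = 0 then l p.1 + l p.2
                  else removeTwo p.1 p.2 l (0 : ℂ) (k.val - 1)) 0) x))
      = (-1:ℂ)^n * ∑ p ∈ Finset.filter (fun p : Fin (n+1) × Fin (n+1) => p.1 < p.2) Finset.univ,
        (-1:ℂ) ^ ((p.1:ℕ) + (p.2:ℕ)) * bcoef (X p.1) (X p.2) * (l p.1 - l p.2) *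
          γ (Fin.snoc (fun k : Fin n => if k.val = 0 then bres (X p.1) (X p.2)
                else removeTwo p.1 p.2 X (0 : Fin 2) (k.val - 1)) 0)
            (Fin.snoc (fun k : Fin n => if k.val = 0 then l p.1 + l p.2
                else removeTwo p.1 p.2 l (0 : ℂ) (k.val - 1)) 0) x := by
    rw [Finset.mul_sum]
    exact Finset.sum_congr rfl fun p _ => by ring
  have hB1 : (∑ i : Fin (n + 1 + 1),
        ((-1:ℂ) ^ (i:ℕ) *
            if (Fin.snoc X (0 : Fin 2) : Fin (n+1+1) → Fin 2) i = 0
            then x + α + Δ * (Fin.snoc l (0:ℂ) : Fin (n+1+1) → ℂ) i else 0) *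
          γ (fun k : Fin (n+1) => removeOne i (Fin.snoc X (0 : Fin 2)) (0 : Fin 2) k.val)
            (fun k : Fin (n+1) => removeOne i (Fin.snoc l (0:ℂ)) (0:ℂ) k.val)
            (x + (Fin.snoc l (0:ℂ) : Fin (n+1+1) → ℂ) i))
      = (∑ i : Fin (n + 1),
          ((-1:ℂ) ^ (i:ℕ) * if X i = 0 then x + α + Δ * l i else 0) *
            γ (Fin.snoc (fun k : Fin n => removeOne i X (0 : Fin 2) k.val) 0)
              (Fin.snoc (fun k : Fin n => removeOne i l (0 : ℂ) k.val) 0) (x + l i))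
        + (-1:ℂ)^(n+1) * ((x + α) * γ X l x) := by
    rw [Fin.sum_univ_castSucc]
    congr 1
    · refine Finset.sum_congr rfl fun i _ => ?_
      rw [removeOne_snoc_castSucc, removeOne_snoc_castSucc]
      simp only [Fin.snoc_castSucc, Fin.coe_castSucc]
    · rw [removeOne_snoc_last, removeOne_snoc_last]
      simp only [Fin.snoc_last, Fin.val_last]
      norm_num
      ring
  have hB2 : (∑ p ∈ Finset.filter (fun p : Fin (n+1+1) × Fin (n+1+1) => p.1 < p.2) Finset.univ,
        (-1:ℂ) ^ ((p.1:ℕ) + (p.2:ℕ)) *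
          bcoef ((Fin.snoc X (0:Fin 2) : Fin (n+1+1) → Fin 2) p.1)
            ((Fin.snoc X (0:Fin 2) : Fin (n+1+1) → Fin 2) p.2) *
          ((Fin.snoc l (0:ℂ) : Fin (n+1+1) → ℂ) p.1
            - (Fin.snoc l (0:ℂ) : Fin (n+1+1) → ℂ) p.2) *
          γ (fun k : Fin (n+1) => if k.val = 0
                then bres ((Fin.snoc X (0:Fin 2) : Fin (n+1+1) → Fin 2) p.1)
                  ((Fin.snoc X (0:Fin 2) : Fin (n+1+1) → Fin 2) p.2)
                else removeTwo p.1 p.2 (Fin.snoc X (0:Fin 2)) (0:Fin 2) (k.val - 1))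
            (fun k : Fin (n+1) => if k.val = 0
                then (Fin.snoc l (0:ℂ) : Fin (n+1+1) → ℂ) p.1
                  + (Fin.snoc l (0:ℂ) : Fin (n+1+1) → ℂ) p.2
                else removeTwo p.1 p.2 (Fin.snoc l (0:ℂ)) (0:ℂ) (k.val - 1)) x)
      = (∑ p ∈ Finset.filter (fun p : Fin (n+1) × Fin (n+1) => p.1 < p.2) Finset.univ,
          (-1:ℂ) ^ ((p.1:ℕ) + (p.2:ℕ)) * bcoef (X p.1) (X p.2) * (l p.1 - l p.2) *
            γ (Fin.snoc (fun k : Fin n => if k.val = 0 then bres (X p.1) (X p.2)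
                  else removeTwo p.1 p.2 X (0 : Fin 2) (k.val - 1)) 0)
              (Fin.snoc (fun k : Fin n => if k.val = 0 then l p.1 + l p.2
                  else removeTwo p.1 p.2 l (0 : ℂ) (k.val - 1)) 0) x)
        + (-1:ℂ)^(n+1) * ((∑ i, l i) * γ X l x) := by
    rw [pair_sum_split]
    congr 1
    · refine Finset.sum_congr rfl fun p hp => ?_
      have hlt : p.1 < p.2 := (Finset.mem_filter.mp hp).2
      rw [removeTwo_snoc_castSucc p.1 p.2 hlt, removeTwo_snoc_castSucc p.1 p.2 hlt]
      simp only [Fin.snoc_castSucc, Fin.coe_castSucc]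
    · have hterm : ∀ i : Fin (n+1),
          ((-1:ℂ) ^ ((i.castSucc : ℕ) + ((Fin.last (n+1)) : ℕ)) *
            bcoef ((Fin.snoc X (0:Fin 2) : Fin (n+1+1) → Fin 2) i.castSucc)
              ((Fin.snoc X (0:Fin 2) : Fin (n+1+1) → Fin 2) (Fin.last (n+1))) *
            ((Fin.snoc l (0:ℂ) : Fin (n+1+1) → ℂ) i.castSucc
              - (Fin.snoc l (0:ℂ) : Fin (n+1+1) → ℂ) (Fin.last (n+1))) *
            γ (fun k : Fin (n+1) => if k.val = 0
                  then bres ((Fin.snoc X (0:Fin 2) : Fin (n+1+1) → Fin 2) i.castSucc)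
                    ((Fin.snoc X (0:Fin 2) : Fin (n+1+1) → Fin 2) (Fin.last (n+1)))
                  else removeTwo i.castSucc (Fin.last (n+1)) (Fin.snoc X (0:Fin 2)) (0:Fin 2)
                    (k.val - 1))
              (fun k : Fin (n+1) => if k.val = 0
                  then (Fin.snoc l (0:ℂ) : Fin (n+1+1) → ℂ) i.castSucc
                    + (Fin.snoc l (0:ℂ) : Fin (n+1+1) → ℂ) (Fin.last (n+1))
                  else removeTwo i.castSucc (Fin.last (n+1)) (Fin.snoc l (0:ℂ)) (0:ℂ)
                    (k.val - 1)) x)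
          = (-1:ℂ)^(n+1) * (l i * γ X l x) := by
        intro i
        rw [removeTwo_castSucc_last, removeTwo_castSucc_last]
        simp only [Fin.snoc_castSucc, Fin.snoc_last, Fin.coe_castSucc, Fin.val_last,
          add_zero, sub_zero, bcoef_zero, bres_zero]
        rw [cons_removeOne_eq_comp_cycleRange, cons_removeOne_eq_comp_cycleRange,
          hskew ((i.cycleRange)⁻¹) X l x]
        have hsign : ((Equiv.Perm.sign (i.cycleRange)⁻¹ : ℤ) : ℂ) = (-1:ℂ)^(i:ℕ) := by
          rw [Equiv.Perm.sign_inv, Fin.sign_cycleRange]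
          push_cast
          ring
        rw [hsign, mul_one]
        calc (-1:ℂ) ^ ((i:ℕ) + (n+1)) * l i * ((-1:ℂ)^(i:ℕ) * γ X l x)
            = ((-1:ℂ) ^ ((i:ℕ) + (n+1)) * (-1:ℂ)^(i:ℕ)) * (l i * γ X l x) := by ring
          _ = (-1:ℂ)^(n+1) * (l i * γ X l x) := by rw [neg_one_pow_cancel]
      rw [Finset.sum_congr rfl fun i _ => hterm i, ← Finset.mul_sum, ← Finset.sum_mul]
  have he : (-1:ℂ)^n * (-1)^n = 1 := by
    rw [← pow_add, show n + n = 2*n by ring, pow_mul]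
    norm_num
  simp only [dV, tauV]
  rw [hB1, hB2, hA1, hA2]
  linear_combination ((x + α) * γ X l x + (∑ i : Fin (n+1), l i) * γ X l x) * he


lemma homotopy0 (Δ α : ℂ) (γ : VCochain 0) (X : Fin 0 → Fin 2) (l : Fin 0 → ℂ) (x : ℂ) :
    tauV (dV Δ α γ) X l x = (α + x) * γ X l x := by
  have hX : ∀ f : Fin 0 → Fin 2, f = X := fun f => funext fun k => k.elim0
  have hl : ∀ f : Fin 0 → ℂ, f = l := fun f => funext fun k => k.elim0
  simp only [dV, tauV]
  rw [show (Finset.filter (fun p : Fin 1 × Fin 1 => p.1 < p.2) Finset.univ) = ∅ by decide]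
  rw [Finset.sum_empty, add_zero, Fin.sum_univ_one]
  rw [hX (fun k => removeOne 0 (Fin.snoc X 0) 0 k.val),
    hl (fun k => removeOne 0 (Fin.snoc l 0) 0 k.val)]
  have h1 : (Fin.snoc X 0 : Fin 1 → Fin 2) 0 = 0 := Fin.snoc_last _ _
  have h2 : (Fin.snoc l 0 : Fin 1 → ℂ) 0 = 0 := Fin.snoc_last _ _
  rw [h1, h2, if_pos rfl, mul_zero, add_zero, add_zero]
  simp only [Fin.val_zero, pow_zero, one_mul]
  ring

/-- the equivalence `Fin q ≃ {k : Fin (q+1) // k.val < q}`. -/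
def castSuccEquiv (q : ℕ) : Fin q ≃ {k : Fin (q+1) // k.val < q} where
  toFun k := ⟨k.castSucc, k.isLt⟩
  invFun k := ⟨k.1.val, k.2⟩
  left_inv k := by simp [Fin.ext_iff]
  right_inv k := by simp [Fin.ext_iff]

lemma extend_snoc {A : Type*} {q : ℕ} (σ : Equiv.Perm (Fin q)) (X : Fin q → A) (d : A) :
    (Fin.snoc X d : Fin (q+1) → A) ∘ (σ.extendDomain (castSuccEquiv q)) =
      Fin.snoc (X ∘ σ) d := by
  funext k
  induction k using Fin.lastCases with
  | last =>
    have h : σ.extendDomain (castSuccEquiv q) (Fin.last q) = Fin.last q :=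
      Equiv.Perm.extendDomain_apply_not_subtype _ _ (by simp)
    simp [h]
  | cast k =>
    have h : σ.extendDomain (castSuccEquiv q) k.castSucc = (σ k).castSucc := by
      have h2 := Equiv.Perm.extendDomain_apply_image σ (castSuccEquiv q) k
      simpa [castSuccEquiv] using h2
    simp [h]

/-- substitution `λᵢ ↦ λᵢ (i ≤ q), λ_{q+1} ↦ 0, ∂ ↦ ∂`. -/
noncomputable def subst0 (q : ℕ) : Fin (q+2) → MvPolynomial (Fin (q+1)) ℂ :=
  Fin.snoc (Fin.snoc (fun i : Fin q => MvPolynomial.X i.castSucc) 0)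
    (MvPolynomial.X (Fin.last q))

lemma eval_subst0 {q : ℕ} (l : Fin q → ℂ) (x : ℂ) (i : Fin (q+2)) :
    eval (Fin.snoc l x) (subst0 q i)
      = (Fin.snoc (Fin.snoc l (0:ℂ)) x : Fin (q+2) → ℂ) i := by
  induction i using Fin.lastCases with
  | last => simp [subst0]
  | cast j =>
    induction j using Fin.lastCases with
    | last => simp [subst0]
    | cast k => simp [subst0]

lemma eval_bind_subst0 {q : ℕ} (P : MvPolynomial (Fin (q+2)) ℂ) (l : Fin q → ℂ) (x : ℂ) :
    eval (Fin.snoc l x) (bind₁ (subst0 q) P)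
      = eval (Fin.snoc (Fin.snoc l (0:ℂ)) x : Fin (q+2) → ℂ) P := by
  have hb := eval₂Hom_bind₁ (RingHom.id ℂ) (Fin.snoc l x) (subst0 q) P
  have h1 : eval (Fin.snoc l x) (bind₁ (subst0 q) P)
      = eval₂Hom (RingHom.id ℂ) (Fin.snoc l x) (bind₁ (subst0 q) P) := rfl
  rw [h1, hb]
  have hfun : (fun i : Fin (q+2) => eval₂Hom (RingHom.id ℂ) (Fin.snoc l x) (subst0 q i))
      = (Fin.snoc (Fin.snoc l (0:ℂ)) x : Fin (q+2) → ℂ) := funext fun i => by rw [← eval_subst0 l x i]; rfl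
  rw [hfun]
  rfl

lemma tauV_mem {q : ℕ} {γ : VCochain (q+1)} (h : IsVCochain γ) : IsVCochain (tauV γ) := by
  obtain ⟨hp, hs⟩ := h
  constructor
  · intro X
    obtain ⟨P, hP⟩ := hp (Fin.snoc X 0)
    refine ⟨C ((-1:ℂ)^q) * bind₁ (subst0 q) P, ?_⟩
    intro l x
    rw [map_mul, eval_C, eval_bind_subst0]
    show (-1:ℂ)^q * γ (Fin.snoc X 0) (Fin.snoc l 0) x = _
    rw [hP (Fin.snoc l 0) x]
  · intro σ X l x
    show (-1:ℂ)^q * γ (Fin.snoc (X ∘ σ) 0) (Fin.snoc (l ∘ σ) 0) x = _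
    rw [← extend_snoc σ X 0, ← extend_snoc σ l 0,
      hs (σ.extendDomain (castSuccEquiv q)) (Fin.snoc X 0) (Fin.snoc l 0) x,
      Equiv.Perm.sign_extendDomain]
    show _ = ((Equiv.Perm.sign σ : ℤ) : ℂ) * ((-1:ℂ)^q * γ (Fin.snoc X 0) (Fin.snoc l 0) x)
    ring

lemma paV_mem {q : ℕ} {γ : VCochain q} (h : IsVCochain γ) : IsVCochain (paV q γ) := by
  obtain ⟨hp, hs⟩ := h
  constructor
  · intro X
    obtain ⟨P, hP⟩ := hp X
    refine ⟨(MvPolynomial.X (Fin.last q) + ∑ i : Fin q, MvPolynomial.X i.castSucc) * P, ?_⟩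
    intro l x
    show (x + ∑ i, l i) * γ X l x = _
    rw [map_mul, map_add, eval_X, map_sum, hP l x, Fin.snoc_last]
    congr 2
    exact Finset.sum_congr rfl fun i _ => by rw [eval_X, Fin.snoc_castSucc]
  · intro σ X l x
    show (x + ∑ i, (l ∘ σ) i) * γ (X ∘ σ) (l ∘ σ) x
      = ((Equiv.Perm.sign σ : ℤ) : ℂ) * ((x + ∑ i, l i) * γ X l x)
    rw [hs σ X l x]
    have hsum : (∑ i, (l ∘ ⇑σ) i) = ∑ i, l i := Equiv.sum_comp σ l
    rw [hsum]
    ring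

lemma sum_snoc_zero {n : ℕ} (l : Fin n → ℂ) :
    ∑ i : Fin (n+1), (Fin.snoc l (0:ℂ) : Fin (n+1) → ℂ) i = ∑ i, l i := by
  rw [Fin.sum_univ_castSucc]
  simp

lemma tau_paV_comm {n : ℕ} (β : VCochain (n+1)) (X : Fin n → Fin 2) (l : Fin n → ℂ) (x : ℂ) :
    tauV (paV (n+1) β) X l x = paV n (tauV β) X l x := by
  show (-1:ℂ)^n * ((x + ∑ i : Fin (n+1), (Fin.snoc l 0 : Fin (n+1) → ℂ) i)
      * β (Fin.snoc X 0) (Fin.snoc l 0) x)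
    = (x + ∑ i, l i) * ((-1:ℂ)^n * β (Fin.snoc X 0) (Fin.snoc l 0) x)
  rw [sum_snoc_zero]
  ring

/-- for `α ≠ 0`, the reduced cohomology of the W(2,2) Lie
conformal algebra `𝒲` with coefficients in `M_{Δ,α}` vanishes in all
degrees. -/
theorem stmt18 (Δ α : ℂ) (hα : α ≠ 0) (q : ℕ) :
    Subsingleton (reducedHV Δ α q) := by
  rw [Submodule.Quotient.subsingleton_iff, Submodule.eq_top_iff']
  rintro ⟨γ, hγ⟩
  rw [Submodule.mem_comap]
  obtain ⟨hc, hz⟩ := Submodule.mem_inf.mp hγ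
  have hcc : IsVCochain γ := hc
  obtain ⟨hpoly, hskew⟩ := hcc
  rw [Submodule.mem_comap] at hz
  obtain ⟨β, hβmem, hβ⟩ := hz
  have hβc : IsVCochain β := hβmem
  show γ ∈ redBV Δ α q
  cases q with
  | zero =>
    have key : paV 0 (α⁻¹ • (tauV β - γ)) = γ := by
      funext X l x
      have hkey2 : x * (tauV β X l x) = (α + x) * γ X l x := by
        have hcm := tau_paV_comm β X l x
        rw [hβ] at hcm
        have h0 := homotopy0 Δ α γ X l x
        calc x * tauV β X l x = (x + ∑ i : Fin 0, l i) * tauV β X l x := by simp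
          _ = paV 0 (tauV β) X l x := rfl
          _ = tauV (dVLin Δ α 0 γ) X l x := hcm.symm
          _ = tauV (dV Δ α γ) X l x := rfl
          _ = (α + x) * γ X l x := h0
      have hl : paV 0 (α⁻¹ • (tauV β - γ)) X l x
          = (x + ∑ i : Fin 0, l i) * (α⁻¹ * (tauV β X l x - γ X l x)) := rfl
      rw [hl]
      simp only [Finset.univ_eq_empty, Finset.sum_empty, add_zero]
      field_simp
      linear_combination hkey2
    exact ⟨α⁻¹ • (tauV β - γ),
      Submodule.smul_mem _ _ (Submodule.sub_mem _ (tauV_mem hβc) hc), key⟩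
  | succ n =>
    have key : γ = dVLin Δ α n (α⁻¹ • tauV γ) + paV (n+1) (α⁻¹ • (tauV β - γ)) := by
      funext X l x
      have h1 := homotopy Δ α γ hskew X l x
      have h2 : tauV (dV Δ α γ) X l x = (x + ∑ i, l i) * tauV β X l x := by
        have hcm := tau_paV_comm β X l x
        rw [hβ] at hcm
        calc tauV (dV Δ α γ) X l x = tauV (dVLin Δ α (n+1) γ) X l x := rfl
          _ = paV (n+1) (tauV β) X l x := hcm
          _ = (x + ∑ i, l i) * tauV β X l x := rfl
      have e1 : dVLin Δ α n (α⁻¹ • tauV γ) X l x = α⁻¹ * dV Δ α (tauV γ) X l x := by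
        rw [map_smul]
        rfl
      have e2 : paV (n+1) (α⁻¹ • (tauV β - γ)) X l x
          = α⁻¹ * ((x + ∑ i, l i) * (tauV β X l x - γ X l x)) := by
        rw [map_smul]
        rfl
      rw [Pi.add_apply, Pi.add_apply, Pi.add_apply] at *
      show γ X l x = dVLin Δ α n (α⁻¹ • tauV γ) X l x + paV (n+1) (α⁻¹ • (tauV β - γ)) X l x
      rw [e1, e2]
      field_simp
      linear_combination h2 - h1
    rw [key]
    exact Submodule.add_mem _
      (Submodule.mem_sup_left (Submodule.mem_map_of_mem
        (Submodule.smul_mem _ _ (show tauV γ ∈ vcochainSub n from tauV_mem ⟨hpoly, hskew⟩))))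
      (Submodule.mem_sup_right (Submodule.mem_map_of_mem
        (Submodule.smul_mem _ _ (Submodule.sub_mem _ (tauV_mem hβc) hc))))
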